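/- Let ((E, L), G, α) be a free labeled graph action, η^0 a section of the vertex quotient map q^0, and η^1 the unique edge section with s(η^1(Ge)) = η^0(s(Ge)). Define c : (E/G)^1 → G by the condition α^0_{c(Ge)}(η^0(r(Ge))) = r(η^1(Ge)). Then the maps φ^0(Gv, g) = α^0_g(η^0(Gv)) and φ^1(Ge, g) = α^1_g(η^1(Ge)) define an isomorphism of directed graphs from the skew product graph (E/G) ×_c G to E, equivariant for left translation on (E/G) ×_c G and the action α on E. -/

import Mathlib

/-!
A free action of `Γ` on the vertices is also free on the edges (look at sources), and for a
free action on a set `X` with a section `η` of `X → X/Γ`, every `x` is `ρ g (η (Γx))` for a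
unique `g`; this makes `φ⁰` and `φ¹` bijective. The source and range conditions are the
defining properties of `η¹` and `c` transported by `α_g`, and equivariance is `α_{gh} = α_g α_h`.
-/

structure DirGraph (V E : Type*) where
  r : E → V
  s : E → V

/-- An action of a group `Γ` on a directed graph. -/
structure GraphAction (Γ V E : Type*) [Group Γ] (G : DirGraph V E) where
  onV : Γ →* Equiv.Perm V
  onE : Γ →* Equiv.Perm E
  compat_r : ∀ g x, onV g (G.r x) = G.r (onE g x)
  compat_s : ∀ g x, onV g (G.s x) = G.s (onE g x)

variable {Γ V E : Type*} [Group Γ] {G : DirGraph V E}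

/-- Orbit relation on vertices. -/
def orbV (α : GraphAction Γ V E G) : V → V → Prop := fun v w => ∃ g, α.onV g v = w

/-- Orbit relation on edges. -/
def orbE (α : GraphAction Γ V E G) : E → E → Prop := fun e f => ∃ g, α.onE g e = f

section PermAction

variable {X : Type*} (ρ : Γ →* Equiv.Perm X)

/-- `orbV α` and `orbE α` are definitionally `permOrbitRel α.onV` and `permOrbitRel α.onE`. -/
def permOrbitRel : X → X → Prop := fun a b => ∃ g, ρ g a = b

theorem permOrbitRel_equivalence : Equivalence (permOrbitRel ρ) where
  refl a := ⟨1, by simp⟩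
  symm := by
    rintro a b ⟨g, rfl⟩
    exact ⟨g⁻¹, by rw [map_inv, Equiv.Perm.coe_inv, Equiv.symm_apply_apply]⟩
  trans := by
    rintro a b c ⟨g, rfl⟩ ⟨h, rfl⟩
    exact ⟨h * g, by simp only [map_mul, Equiv.Perm.mul_apply]⟩

theorem quot_mk_permOrbitRel_eq_iff {a b : X} :
    Quot.mk (permOrbitRel ρ) a = Quot.mk (permOrbitRel ρ) b ↔ ∃ g, ρ g a = b :=
  Quot.eq.trans (permOrbitRel_equivalence ρ).eqvGen_iff

theorem bijective_apply_section (hfree : ∀ g x, ρ g x = x → g = 1)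
    (η : Quot (permOrbitRel ρ) → X) (hη : ∀ q, Quot.mk (permOrbitRel ρ) (η q) = q) :
    Function.Bijective fun p : Quot (permOrbitRel ρ) × Γ => ρ p.2 (η p.1) := by
  refine ⟨?_, fun x => ?_⟩
  · rintro ⟨q, g⟩ ⟨q', g'⟩ (hgg' : ρ g (η q) = ρ g' (η q'))
    have hmove : ρ (g'⁻¹ * g) (η q) = η q' := by
      rw [map_mul, Equiv.Perm.mul_apply, hgg', map_inv, Equiv.Perm.coe_inv,
        Equiv.symm_apply_apply]
    obtain rfl : q = q' := by
      rw [← hη q, ← hη q', quot_mk_permOrbitRel_eq_iff]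
      exact ⟨_, hmove⟩
    rw [inv_mul_eq_one.mp (hfree _ _ hmove)]
  · obtain ⟨g, hg⟩ := (quot_mk_permOrbitRel_eq_iff ρ).mp (hη (Quot.mk _ x))
    exact ⟨(Quot.mk _ x, g), hg⟩

end PermAction

theorem GraphAction.onE_free {α : GraphAction Γ V E G}
    (hfree : ∀ (g : Γ) (v : V), α.onV g v = v → g = 1) (g : Γ) (e : E)
    (he : α.onE g e = e) : g = 1 :=
  hfree g (G.s e) (by rw [α.compat_s, he])

/-- Given a free graph action, sections `η⁰, η¹` with `s(η¹(Ge)) = η⁰(s(Ge))`, and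
`c : (E/Γ)¹ → Γ` defined by `α_{c(Ge)}(η⁰(r(Ge))) = r(η¹(Ge))`, the maps
`φ⁰(Gv, g) = α_g(η⁰(Gv))` and `φ¹(Ge, g) = α_g(η¹(Ge))` give an isomorphism of
directed graphs from the skew product `(E/Γ) ×_c Γ` to `E`, equivariant for left
translation and the action `α`. -/
theorem stmt18 (α : GraphAction Γ V E G)
    (hfree : ∀ (g : Γ) (v : V), α.onV g v = v → g = 1)
    (η0 : Quot (orbV α) → V) (hη0 : ∀ x, Quot.mk (orbV α) (η0 x) = x)
    (η1 : Quot (orbE α) → E) (hη1 : ∀ x, Quot.mk (orbE α) (η1 x) = x)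
    (hη1s : ∀ e : E, G.s (η1 (Quot.mk (orbE α) e)) = η0 (Quot.mk (orbV α) (G.s e)))
    (c : Quot (orbE α) → Γ)
    (hc : ∀ e : E,
      α.onV (c (Quot.mk (orbE α) e)) (η0 (Quot.mk (orbV α) (G.r e))) =
        G.r (η1 (Quot.mk (orbE α) e))) :
    let φ0 : Quot (orbV α) × Γ → V := fun p => α.onV p.2 (η0 p.1)
    let φ1 : Quot (orbE α) × Γ → E := fun p => α.onE p.2 (η1 p.1)
    Function.Bijective φ0 ∧ Function.Bijective φ1 ∧
    -- φ intertwines the source maps of the skew product and of E: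
    (∀ (e : E) (g : Γ),
      G.s (φ1 (Quot.mk (orbE α) e, g)) = φ0 (Quot.mk (orbV α) (G.s e), g)) ∧
    -- φ intertwines the range maps:
    (∀ (e : E) (g : Γ),
      G.r (φ1 (Quot.mk (orbE α) e, g)) =
        φ0 (Quot.mk (orbV α) (G.r e), g * c (Quot.mk (orbE α) e))) ∧
    -- equivariance for left translation and α:
    (∀ (g : Γ) (x : Quot (orbV α)) (h : Γ), φ0 (x, g * h) = α.onV g (φ0 (x, h))) ∧
    (∀ (g : Γ) (x : Quot (orbE α)) (h : Γ), φ1 (x, g * h) = α.onE g (φ1 (x, h))) := by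
  intro φ0 φ1
  refine ⟨bijective_apply_section α.onV hfree η0 hη0,
    bijective_apply_section α.onE (GraphAction.onE_free hfree) η1 hη1,
    fun e g => ?_, fun e g => ?_, fun g x h => ?_, fun g x h => ?_⟩
  · rw [← α.compat_s, hη1s]
  · dsimp only [φ0, φ1]
    rw [← α.compat_r, map_mul, Equiv.Perm.mul_apply, hc]
  · exact congrArg (· (η0 x)) (map_mul α.onV g h)
  · exact congrArg (· (η1 x)) (map_mul α.onE g h)
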